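/- Let E₀(ρ) = log₂ Σ_y (Σ_x p_{XY}(x,y)^{1/(1+ρ)})^{1+ρ} be the Gallager function of a joint source. Then for ρ > 0, ρ·H(p̄^ρ_{X|Y}) − E₀(ρ) = D(p̄^ρ_{XY} ‖ p_{XY}), where p̄^ρ is the X–Y tilted distribution, H(p̄^ρ_{X|Y}) its conditional entropy, and D the KL divergence (all in bits). -/

import Mathlib

/-- The `X–Y` tilted distribution `p̄^ρ_{XY}` of a joint pmf `p` on `𝒳 × 𝒴`. -/
noncomputable def tilt {𝒳 𝒴 : Type*} [Fintype 𝒳] [Fintype 𝒴]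
    (p : 𝒳 × 𝒴 → ℝ) (ρ : ℝ) (z : 𝒳 × 𝒴) : ℝ :=
  ((∑ s, p (s, z.2) ^ ((1 : ℝ) / (1 + ρ))) ^ (1 + ρ)
      / ∑ t, (∑ s, p (s, t) ^ ((1 : ℝ) / (1 + ρ))) ^ (1 + ρ))
    * (p z ^ ((1 : ℝ) / (1 + ρ)) / ∑ s, p (s, z.2) ^ ((1 : ℝ) / (1 + ρ)))

/-- Conditional Shannon entropy `H(X|Y)` (in bits) of a joint pmf on `𝒳 × 𝒴`. -/
noncomputable def condEnt {𝒳 𝒴 : Type*} [Fintype 𝒳] [Fintype 𝒴] (p : 𝒳 × 𝒴 → ℝ) : ℝ :=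
  -∑ z : 𝒳 × 𝒴, p z * Real.logb 2 (p z / ∑ x, p (x, z.2))

/-- KL divergence (in bits) between pmfs on a finite set. -/
noncomputable def klDiv {α : Type*} [Fintype α] (q p : α → ℝ) : ℝ :=
  ∑ a, q a * Real.logb 2 (q a / p a)

/-- Gallager source function `E₀(ρ)` for a joint source with side-information. -/
noncomputable def gallagerE0 {𝒳 𝒴 : Type*} [Fintype 𝒳] [Fintype 𝒴]
    (p : 𝒳 × 𝒴 → ℝ) (ρ : ℝ) : ℝ :=
  Real.logb 2 (∑ y, (∑ x, p (x, y) ^ ((1 : ℝ) / (1 + ρ))) ^ (1 + ρ))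

/-!
With `α = 1/(1+ρ)`, `A y = ∑ₓ p(x,y)^α` and `Z = ∑_y (A y)^(1+ρ) = 2^E₀(ρ)`, the tilted
distribution is `q(x,y) = (A y)^ρ p(x,y)^α / Z` with conditional `q(x|y) = p(x,y)^α / A y`.
Wherever `p(x,y) > 0` this gives, since `α (1+ρ) = 1`,
`log (q(x,y)/p(x,y)) + ρ log q(x|y) + log Z = (α (1+ρ) - 1) log p(x,y) = 0`;
averaging over `q`, whose total mass is `1` (or `q = 0` and `Z = 0`, where `log Z` is the junk
value `0`), yields `D(q‖p) - ρ H(q_{X|Y}) + E₀(ρ) = 0`.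
-/

open Real Finset

namespace GallagerTilt

variable {𝒳 𝒴 : Type*} [Fintype 𝒳] (p : 𝒳 × 𝒴 → ℝ) (ρ : ℝ)

noncomputable def powSum (y : 𝒴) : ℝ :=
  ∑ s, p (s, y) ^ ((1 : ℝ) / (1 + ρ))

variable {p ρ} in
theorem powSum_pos (hp : ∀ z, 0 ≤ p z) {z : 𝒳 × 𝒴} (hpz : 0 < p z) :
    0 < powSum p ρ z.2 :=
  sum_pos' (fun _ _ => rpow_nonneg (hp _) _) ⟨z.1, mem_univ _, rpow_pos_of_pos hpz _⟩

variable [Fintype 𝒴]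

noncomputable def gallagerSum : ℝ :=
  ∑ t, powSum p ρ t ^ (1 + ρ)

theorem tilt_eq (z : 𝒳 × 𝒴) :
    tilt p ρ z = powSum p ρ z.2 ^ (1 + ρ) / gallagerSum p ρ
      * (p z ^ ((1 : ℝ) / (1 + ρ)) / powSum p ρ z.2) :=
  rfl

theorem gallagerE0_eq_logb_gallagerSum : gallagerE0 p ρ = logb 2 (gallagerSum p ρ) :=
  rfl

variable {p ρ}

theorem sum_tilt_fst (hρ : 1 + ρ ≠ 0) (y : 𝒴) :
    ∑ x, tilt p ρ (x, y) = powSum p ρ y ^ (1 + ρ) / gallagerSum p ρ := by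
  simp_rw [tilt_eq, ← mul_sum, ← sum_div]
  rw [← mul_div_assoc]
  refine mul_div_cancel_of_imp fun (hA : powSum p ρ y = 0) => ?_
  rw [hA, zero_rpow hρ, zero_div]

theorem sum_tilt_eq_one (hρ : 1 + ρ ≠ 0) (hZ : gallagerSum p ρ ≠ 0) :
    ∑ z, tilt p ρ z = 1 := by
  rw [Fintype.sum_prod_type_right]
  simp_rw [sum_tilt_fst hρ, ← sum_div]
  exact div_self hZ

theorem sum_tilt_mul_logb_gallagerSum (hρ : 1 + ρ ≠ 0) (b : ℝ) :
    (∑ z, tilt p ρ z) * logb b (gallagerSum p ρ) = logb b (gallagerSum p ρ) := by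
  rcases eq_or_ne (gallagerSum p ρ) 0 with hZ | hZ
  · rw [hZ, logb_zero, mul_zero]
  · rw [sum_tilt_eq_one hρ hZ, one_mul]

theorem gallagerSum_pos (hp : ∀ z, 0 ≤ p z) {z : 𝒳 × 𝒴} (hpz : 0 < p z) :
    0 < gallagerSum p ρ :=
  sum_pos' (fun _ _ => rpow_nonneg (sum_nonneg fun _ _ => rpow_nonneg (hp _) _) _)
    ⟨z.2, mem_univ _, rpow_pos_of_pos (powSum_pos hp hpz) _⟩

theorem logb_tilt_add_mul_logb_cond_add_logb {a P Z : ℝ} (ha : 0 < a) (hP : 0 < P)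
    (hZ : 0 < Z) (hρ : 1 + ρ ≠ 0) (b : ℝ) :
    logb b (a ^ (1 + ρ) / Z * (P ^ ((1 : ℝ) / (1 + ρ)) / a) / P)
      + ρ * logb b (P ^ ((1 : ℝ) / (1 + ρ)) / a) + logb b Z = 0 := by
  have haρ := rpow_pos_of_pos ha (1 + ρ)
  have hPα := rpow_pos_of_pos hP ((1 : ℝ) / (1 + ρ))
  rw [logb_div (by positivity) hP.ne', logb_mul (by positivity) (by positivity),
    logb_div haρ.ne' hZ.ne', logb_div hPα.ne' ha.ne',
    logb_rpow_eq_mul_logb_of_pos ha, logb_rpow_eq_mul_logb_of_pos hP]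
  field_simp
  ring

theorem tilt_mul_logb_add_eq_zero (hp : ∀ z, 0 ≤ p z) (hρ : 1 + ρ ≠ 0) (z : 𝒳 × 𝒴) :
    tilt p ρ z * logb 2 (tilt p ρ z / p z)
      + ρ * (tilt p ρ z * logb 2 (tilt p ρ z / ∑ x, tilt p ρ (x, z.2)))
      + tilt p ρ z * logb 2 (gallagerSum p ρ) = 0 := by
  rcases (hp z).eq_or_lt with hpz | hpz
  · have : tilt p ρ z = 0 := by
      rw [tilt_eq, ← hpz, zero_rpow (one_div_ne_zero hρ), zero_div, mul_zero]
    simp [this]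
  · have hA := powSum_pos (ρ := ρ) hp hpz
    have hZ := gallagerSum_pos (ρ := ρ) hp hpz
    have hcond : tilt p ρ z / ∑ x, tilt p ρ (x, z.2)
        = p z ^ ((1 : ℝ) / (1 + ρ)) / powSum p ρ z.2 := by
      rw [sum_tilt_fst hρ, tilt_eq]
      field_simp
    have hlog := logb_tilt_add_mul_logb_cond_add_logb hA hpz hZ hρ 2
    rw [← tilt_eq] at hlog
    rw [hcond]
    linear_combination tilt p ρ z * hlog

end GallagerTilt

open GallagerTilt in
theorem tilted_identity_general {𝒳 𝒴 : Type*} [Fintype 𝒳] [Fintype 𝒴]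
    (p : 𝒳 × 𝒴 → ℝ) (hp : ∀ z, 0 ≤ p z)
    (ρ : ℝ) (hρ : 0 < ρ) :
    ρ * condEnt (tilt p ρ) - gallagerE0 p ρ = klDiv (tilt p ρ) p := by
  have h1ρ : 1 + ρ ≠ 0 := by positivity
  have hsum : ∑ z, (tilt p ρ z * logb 2 (tilt p ρ z / p z)
      + ρ * (tilt p ρ z * logb 2 (tilt p ρ z / ∑ x, tilt p ρ (x, z.2)))
      + tilt p ρ z * logb 2 (gallagerSum p ρ)) = 0 :=
    sum_eq_zero fun z _ => tilt_mul_logb_add_eq_zero hp h1ρ z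
  rw [sum_add_distrib, sum_add_distrib, ← mul_sum, ← sum_mul,
    sum_tilt_mul_logb_gallagerSum h1ρ] at hsum
  rw [condEnt, klDiv, gallagerE0_eq_logb_gallagerSum]
  linarith

/-- For `ρ > 0`,
`ρ·H(p̄^ρ_{X|Y}) − E₀(ρ) = D(p̄^ρ_{XY} ‖ p_{XY})` (all in bits). -/
theorem tilted_identity {𝒳 𝒴 : Type*} [Fintype 𝒳] [Fintype 𝒴]
    (p : 𝒳 × 𝒴 → ℝ) (hp : ∀ z, 0 ≤ p z) (hpsum : ∑ z, p z = 1)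
    (hY : ∀ y, 0 < ∑ x, p (x, y))
    (ρ : ℝ) (hρ : 0 < ρ) :
    ρ * condEnt (tilt p ρ) - gallagerE0 p ρ = klDiv (tilt p ρ) p :=
  tilted_identity_general p hp ρ hρ
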